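/- Let H be a Hopf algebra over a field k, G a group with unit e, and (α_p)_{p∈G} k-algebra automorphisms of H with Δ ∘ α_p = (α_p ⊗ α_p) ∘ Δ, α_e = id_H, and α_p ∘ α_q = α_{pq} for all p, q ∈ G. Then the twisted comultiplications Δ_{p,q} := (α_q ⊗ id_H) ∘ Δ form a coassociative family with counit ε: for all p, q, r ∈ G, (Δ_{p,q} ⊗ id) ∘ Δ_{pq,r} = (id ⊗ Δ_{q,r}) ∘ Δ_{p,qr} as maps H → H ⊗ H ⊗ H (identifying (H ⊗ H) ⊗ H ≅ H ⊗ (H ⊗ H)), and (id ⊗ ε) ∘ Δ_{p,e} = id_H and (ε ⊗ id) ∘ Δ_{e,p} = id_H for all p ∈ G. -/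
import Mathlib

noncomputable section

open TensorProduct

private lemma assocNat {k : Type*} [Field k] {H : Type*} [AddCommGroup H] [Module k H]
    (f g h : H →ₗ[k] H) (t : (H ⊗[k] H) ⊗[k] H) :
    (TensorProduct.assoc k H H H) (TensorProduct.map (TensorProduct.map f g) h t)
      = TensorProduct.map f (TensorProduct.map g h) ((TensorProduct.assoc k H H H) t) := by
  induction t with
  | zero => simp
  | add x y hx hy => simp [hx, hy]
  | tmul x y =>
    induction x with
    | zero => simp
    | add u v hu hv => simp_all [add_tmul]
    | tmul u v => simp

private lemma lidNat {k : Type*} [Field k] {H : Type*} [AddCommGroup H] [Module k H]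
    (f : H →ₗ[k] H) (t : k ⊗[k] H) :
    (TensorProduct.lid k H) (TensorProduct.map LinearMap.id f t)
      = f ((TensorProduct.lid k H) t) := by
  induction t with
  | zero => simp
  | add x y hx hy => simp [hx, hy]
  | tmul x y => simp

def twistedComul {k : Type*} [Field k] {H : Type*} [Ring H] [HopfAlgebra k H]
    {G : Type*} [Group G] (α : G → (H ≃ₐ[k] H)) (p q : G) : H →ₗ[k] H ⊗[k] H :=
  TensorProduct.map (α q).toLinearMap LinearMap.id ∘ₗ Coalgebra.comul

/-- the twisted comultiplications `Δ_{p,q} = (α_q ⊗ id) ∘ Δ` form a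
coassociative family with counit `ε`. -/
theorem twistedComul_coassoc_counit
    {k : Type*} [Field k] {H : Type*} [Ring H] [HopfAlgebra k H]
    {G : Type*} [Group G] (α : G → (H ≃ₐ[k] H))
    (hcomul : ∀ (p : G) (a : H),
      Coalgebra.comul (R := k) ((α p) a)
        = TensorProduct.map (α p).toLinearMap (α p).toLinearMap
            (Coalgebra.comul (R := k) a))
    (hone : ∀ a : H, α 1 a = a)
    (hmul : ∀ (p q : G) (a : H), α p (α q a) = α (p * q) a) :
    (∀ (p q r : G) (a : H),
      (TensorProduct.assoc k H H H)
          (TensorProduct.map (twistedComul α p q) LinearMap.id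
            ((twistedComul α (p * q) r) a))
        = TensorProduct.map LinearMap.id (twistedComul α q r)
            ((twistedComul α p (q * r)) a)) ∧
    (∀ (p : G) (a : H),
      (TensorProduct.rid k H)
          (TensorProduct.map LinearMap.id (Coalgebra.counit (R := k))
            ((twistedComul α p 1) a)) = a) ∧
    (∀ (p : G) (a : H),
      (TensorProduct.lid k H)
          (TensorProduct.map (Coalgebra.counit (R := k)) LinearMap.id
            ((twistedComul α 1 p) a)) = a) := by
  have key : ∀ p : G, (Coalgebra.comul (R := k)) ∘ₗ (α p).toLinearMap
      = TensorProduct.map (α p).toLinearMap (α p).toLinearMap ∘ₗ Coalgebra.comul :=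
    fun p => LinearMap.ext (hcomul p)
  have hmul' : ∀ p q : G, (α p).toLinearMap ∘ₗ (α q).toLinearMap = (α (p * q)).toLinearMap :=
    fun p q => LinearMap.ext (hmul p q)
  have hone' : (α (1 : G)).toLinearMap = (LinearMap.id : H →ₗ[k] H) := LinearMap.ext hone
  refine ⟨fun p q r a => ?_, fun p a => ?_, fun p a => ?_⟩
  · -- coassociativity
    have step : TensorProduct.map (twistedComul α p q) LinearMap.id
          ((twistedComul α (p * q) r) a)
        = TensorProduct.map (TensorProduct.map (α (q * r)).toLinearMap (α r).toLinearMap)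
            LinearMap.id ((Coalgebra.comul (R := k)).rTensor H (Coalgebra.comul a)) := by
      have hm : TensorProduct.map (twistedComul α p q) LinearMap.id
            ∘ₗ TensorProduct.map (α r).toLinearMap LinearMap.id
          = TensorProduct.map
              (TensorProduct.map (α (q * r)).toLinearMap (α r).toLinearMap)
              LinearMap.id ∘ₗ (Coalgebra.comul (R := k)).rTensor H := by
        apply TensorProduct.ext'
        intro x y
        simp only [LinearMap.comp_apply, TensorProduct.map_tmul, LinearMap.id_apply,
          LinearMap.rTensor_tmul, AlgEquiv.toLinearMap_apply]
        congr 1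
        rw [show twistedComul α p q ((α r) x)
            = TensorProduct.map (α q).toLinearMap LinearMap.id
                (Coalgebra.comul ((α r) x)) from rfl,
          hcomul r x, ← LinearMap.comp_apply, ← TensorProduct.map_comp, hmul',
          LinearMap.id_comp]
      have h0 : (twistedComul α (p * q) r) a
          = TensorProduct.map (α r).toLinearMap LinearMap.id (Coalgebra.comul a) := rfl
      rw [h0]
      exact LinearMap.congr_fun hm (Coalgebra.comul a)
    rw [step, assocNat, Coalgebra.coassoc_apply]
    have hm2 : TensorProduct.map (α (q * r)).toLinearMap
          (TensorProduct.map (α r).toLinearMap LinearMap.id)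
          ∘ₗ (Coalgebra.comul (R := k)).lTensor H
        = TensorProduct.map LinearMap.id (twistedComul α q r)
          ∘ₗ TensorProduct.map (α (q * r)).toLinearMap LinearMap.id := by
      apply TensorProduct.ext'
      intro x y
      simp [twistedComul]
    have : twistedComul α p (q * r) a
        = TensorProduct.map (α (q * r)).toLinearMap LinearMap.id (Coalgebra.comul a) := rfl
    rw [this]
    exact LinearMap.congr_fun hm2 (Coalgebra.comul a)
  · -- right counit
    simp only [twistedComul, LinearMap.comp_apply, hone']
    rw [TensorProduct.map_id, LinearMap.id_apply]
    have : (TensorProduct.map (LinearMap.id : H →ₗ[k] H) (Coalgebra.counit (R := k))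
          : H ⊗[k] H →ₗ[k] H ⊗[k] k)
        = (Coalgebra.counit (R := k)).lTensor H := rfl
    rw [this, Coalgebra.lTensor_counit_comul]
    simp
  · -- left counit
    apply (α p).injective
    have hm3 : TensorProduct.map (Coalgebra.counit (R := k)) LinearMap.id
          ∘ₗ TensorProduct.map (α p).toLinearMap LinearMap.id
        = TensorProduct.map LinearMap.id (α p).symm.toLinearMap
          ∘ₗ (Coalgebra.counit (R := k)).rTensor H
          ∘ₗ TensorProduct.map (α p).toLinearMap (α p).toLinearMap := by
      apply TensorProduct.ext'
      intro x y
      simp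
    simp only [twistedComul, LinearMap.comp_apply]
    rw [← LinearMap.comp_apply (TensorProduct.map _ _), hm3]
    simp only [LinearMap.comp_apply, ← hcomul p a, Coalgebra.rTensor_counit_comul]
    rw [lidNat]
    simp
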